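/- arXiv:2102.04348 — 6 statements merged into one kernel-verified Lean document; each statement's English description precedes it below -/
import Mathlib

section
/- Let M = (E, I) be a matroid and w : E → ℝ≥0 a weight function. If T ⊆ E is a maximum-weight independent set, then w(T) = ∫₀^∞ rank({e ∈ T : w(e) ≥ θ}) dθ. -/
open Finset
open scoped Classical

structure FinMatroid (α : Type) [DecidableEq α] where
  E : Finset α
  Indep : Finset α → Prop
  indep_empty : Indep ∅
  subset_ground : ∀ ⦃X⦄, Indep X → X ⊆ E
  indep_mono : ∀ ⦃X Y⦄, X ⊆ Y → Indep Y → Indep X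
  indep_exchange : ∀ ⦃X Y⦄, Indep X → Indep Y → X.card < Y.card →
    ∃ e ∈ Y \ X, Indep (insert e X)

namespace FinMatroid

variable {α : Type} [DecidableEq α]

noncomputable def rank (M : FinMatroid α) (X : Finset α) : ℕ :=
  sSup {n | ∃ Y ⊆ X, M.Indep Y ∧ Y.card = n}

def spn (M : FinMatroid α) (X : Finset α) : Set α :=
  {e | e ∈ M.E ∧ M.rank (insert e X) = M.rank X}

end FinMatroid

/-! Every subset of the independent set `T` has rank equal to its cardinality, so the integrand is
`#{e ∈ T | θ ≤ w e} = ∑ e ∈ T, 1[θ ≤ w e]`, and the identity is the layer-cake formula: each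
`e ∈ T` contributes `∫₀^∞ 1[θ ≤ w e] dθ = w e`. -/

open MeasureTheory

lemma FinMatroid.rank_eq_card_of_indep {α : Type} [DecidableEq α] (M : FinMatroid α)
    {X : Finset α} (hX : M.Indep X) : M.rank X = X.card := by
  have hX_mem : X.card ∈ {n | ∃ Y ⊆ X, M.Indep Y ∧ Y.card = n} := ⟨X, subset_rfl, hX, rfl⟩
  have hX_ub : ∀ n ∈ {n | ∃ Y ⊆ X, M.Indep Y ∧ Y.card = n}, n ≤ X.card := by
    rintro n ⟨Y, hYX, -, rfl⟩
    exact card_le_card hYX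
  exact le_antisymm (csSup_le ⟨_, hX_mem⟩ hX_ub) (le_csSup ⟨_, hX_ub⟩ hX_mem)

lemma integral_Ioi_indicator_Iic_one {a : ℝ} (ha : 0 ≤ a) :
    ∫ θ in Set.Ioi (0 : ℝ), (Set.Iic a).indicator 1 θ = a := by
  rw [integral_indicator_one measurableSet_Iic, measureReal_restrict_apply measurableSet_Iic,
    Set.Iic_inter_Ioi, Real.volume_real_Ioc_of_le ha, sub_zero]

lemma integrableOn_Ioi_indicator_Iic_one (a : ℝ) :
    IntegrableOn ((Set.Iic a).indicator (1 : ℝ → ℝ)) (Set.Ioi (0 : ℝ)) := by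
  refine (integrable_indicator_iff measurableSet_Iic).2 (integrableOn_const ?_)
  rw [Measure.restrict_apply measurableSet_Iic, Set.Iic_inter_Ioi, Real.volume_Ioc]
  exact ENNReal.ofReal_ne_top

lemma card_filter_le_eq_sum_indicator {ι : Type*} (s : Finset ι) (f : ι → ℝ) (θ : ℝ) :
    ((s.filter fun i => θ ≤ f i).card : ℝ) = ∑ i ∈ s, (Set.Iic (f i)).indicator 1 θ := by
  rw [card_filter, Nat.cast_sum]
  refine sum_congr rfl fun i _ => ?_
  by_cases h : θ ≤ f i <;> simp [h]

theorem sum_eq_integral_card_filter_le {ι : Type*} (s : Finset ι) {f : ι → ℝ}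
    (hf : ∀ i, 0 ≤ f i) :
    ∑ i ∈ s, f i = ∫ θ in Set.Ioi (0 : ℝ), ((s.filter fun i => θ ≤ f i).card : ℝ) := by
  simp_rw [card_filter_le_eq_sum_indicator]
  rw [integral_finsetSum _ fun i _ => integrableOn_Ioi_indicator_Iic_one (f i)]
  exact sum_congr rfl fun i _ => (integral_Ioi_indicator_Iic_one (hf i)).symm

theorem stmt1_general {α : Type} [DecidableEq α] (M : FinMatroid α) (w : α → ℝ)
    (hw : ∀ e, 0 ≤ w e) (T : Finset α) (hT : M.Indep T) :
    ∑ e ∈ T, w e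
      = ∫ θ in Set.Ioi (0 : ℝ), ((M.rank (T.filter fun e => θ ≤ w e) : ℝ)) := by
  simp_rw [M.rank_eq_card_of_indep (M.indep_mono (filter_subset _ T) hT)]
  exact sum_eq_integral_card_filter_le T hw

theorem stmt1 {α : Type} [DecidableEq α] (M : FinMatroid α) (w : α → ℝ)
    (hw : ∀ e, 0 ≤ w e) (T : Finset α) (hT : M.Indep T)
    (hmax : ∀ X, M.Indep X → ∑ e ∈ X, w e ≤ ∑ e ∈ T, w e) :
    ∑ e ∈ T, w e
      = ∫ θ in Set.Ioi (0 : ℝ), ((M.rank (T.filter fun e => θ ≤ w e) : ℝ)) :=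
  stmt1_general M w hw T hT
end

section
/- Let M = (E, I) be a matroid, S ⊆ E, and w : E → ℝ≥0 such that every e ∈ E \ S satisfies e ∈ spn({f ∈ S : w(f) ≥ w(e)}). Then a maximum-weight independent set of M restricted to S is also a maximum-weight independent set of M over all of E. -/
open Finset
open scoped Classical

/-!
Let `X` be independent and `e ∈ X \ S`, and let `A = {f ∈ S : w e ≤ w f}`. If no `f ∈ A \ X`
could be added to `X - e`, then `X - e` would be a basis of `A ∪ (X - e)`; as spans are monotone,
`e` is spanned by that set, so `X ⊆ insert e (A ∪ (X - e))` would be an independent set larger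
than its rank. Hence some `f ∈ A` can replace `e`: the swap keeps `X` independent, does not
decrease its weight and moves it one element closer to `S`, so after `|X \ S|` swaps we reach an
independent subset of `S` at least as heavy as `X`.
-/

namespace FinMatroid

variable {α : Type} [DecidableEq α] (M : FinMatroid α)

lemma bddAbove_card_indep_subset (X : Finset α) :
    BddAbove {n | ∃ Y ⊆ X, M.Indep Y ∧ Y.card = n} :=
  ⟨X.card, by rintro _ ⟨Y, hYX, -, rfl⟩; exact card_le_card hYX⟩

lemma exists_indep_card_eq_rank (X : Finset α) :
    ∃ B ⊆ X, M.Indep B ∧ B.card = M.rank X :=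
  Nat.sSup_mem (s := {n | ∃ Y ⊆ X, M.Indep Y ∧ Y.card = n})
    ⟨0, ∅, empty_subset X, M.indep_empty, rfl⟩ (M.bddAbove_card_indep_subset X)

variable {M}

lemma card_le_rank {X Y : Finset α} (hYX : Y ⊆ X) (hY : M.Indep Y) : Y.card ≤ M.rank X :=
  le_csSup (M.bddAbove_card_indep_subset X) ⟨Y, hYX, hY, rfl⟩

lemma card_eq_rank_of_maximal {X B : Finset α} (hBX : B ⊆ X) (hB : M.Indep B)
    (hmax : ∀ x ∈ X, x ∉ B → ¬ M.Indep (insert x B)) : B.card = M.rank X := by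
  refine (card_le_rank hBX hB).antisymm (not_lt.mp fun hlt => ?_)
  obtain ⟨C, hCX, hC, hCcard⟩ := M.exists_indep_card_eq_rank X
  obtain ⟨x, hx, hxB⟩ := M.indep_exchange hB hC (hCcard ▸ hlt)
  rw [mem_sdiff] at hx
  exact hmax x (hCX hx.1) hx.2 hxB

lemma exists_superset_card_eq_rank {B Z : Finset α} (hBZ : B ⊆ Z) (hB : M.Indep B) :
    ∃ B', B ⊆ B' ∧ B' ⊆ Z ∧ M.Indep B' ∧ B'.card = M.rank Z := by
  obtain ⟨C, hC, hCmax⟩ := exists_max_image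
    (Z.powerset.filter fun C => B ⊆ C ∧ M.Indep C) card ⟨B, by simp [hBZ, hB]⟩
  simp only [mem_filter, mem_powerset] at hC hCmax
  obtain ⟨hCZ, hBC, hCind⟩ := hC
  refine ⟨C, hBC, hCZ, hCind, card_eq_rank_of_maximal hCZ hCind fun x hxZ hxC hxC' => ?_⟩
  have := hCmax _ ⟨insert_subset hxZ hCZ, hBC.trans (subset_insert x C), hxC'⟩
  rw [card_insert_of_notMem hxC] at this
  omega

lemma spn_subset_spn {A B : Finset α} (hAB : A ⊆ B) : M.spn A ⊆ M.spn B := by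
  rintro e ⟨heE, he⟩
  refine ⟨heE, ?_⟩
  obtain ⟨BA, hBA, hBAind, hBAcard⟩ := M.exists_indep_card_eq_rank A
  obtain ⟨B', hBAB', hB'B, hB', hB'card⟩ :=
    exists_superset_card_eq_rank (hBA.trans hAB) hBAind
  rw [← hB'card]
  refine (card_eq_rank_of_maximal (hB'B.trans (subset_insert e B)) hB' ?_).symm
  intro x hx hxB' hxind
  rcases mem_insert.mp hx with rfl | hxB
  · have := card_le_rank (insert_subset_insert x hBA)
      (M.indep_mono (insert_subset_insert x hBAB') hxind)
    rw [card_insert_of_notMem fun h => hxB' (hBAB' h), he] at this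
    omega
  · have := card_le_rank (insert_subset hxB hB'B) hxind
    rw [card_insert_of_notMem hxB'] at this
    omega

lemma exists_insert_erase_indep_of_mem_spn {I A : Finset α} {e : α} (hI : M.Indep I)
    (heI : e ∈ I) (heA : e ∉ A) (he : e ∈ M.spn A) :
    ∃ a ∈ A, a ∉ I ∧ M.Indep (insert a (I.erase e)) := by
  by_contra! hno
  set J := I.erase e
  have hJ : M.Indep J := M.indep_mono (erase_subset e I) hI
  have hrank : M.rank (A ∪ J) = J.card := by
    refine (card_eq_rank_of_maximal subset_union_right hJ fun a ha haJ => ?_).symm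
    have haA : a ∈ A := by simpa [haJ] using ha
    refine hno a haA fun haI => haJ (mem_erase.mpr ⟨?_, haI⟩)
    rintro rfl
    exact heA haA
  have hrank_insert : M.rank (insert e (A ∪ J)) = J.card :=
    ((spn_subset_spn subset_union_left he).2).trans hrank
  have hIsub : I ⊆ insert e (A ∪ J) := by
    rw [← insert_erase heI]
    exact insert_subset_insert e subset_union_right
  have hIcard : J.card + 1 = I.card := card_erase_add_one heI
  have := card_le_rank hIsub hI
  omega

lemma exists_indep_subset_sum_le {w : α → ℝ} {S : Finset α}
    (hspan : ∀ e ∈ M.E, e ∉ S → e ∈ M.spn (S.filter fun f => w e ≤ w f))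
    {X : Finset α} (hX : M.Indep X) :
    ∃ Y ⊆ S, M.Indep Y ∧ ∑ e ∈ X, w e ≤ ∑ e ∈ Y, w e := by
  induction hn : (X \ S).card using Nat.strong_induction_on generalizing X with
  | _ n ih =>
  by_cases hXS : X ⊆ S
  · exact ⟨X, hXS, hX, le_rfl⟩
  obtain ⟨e, heX, heS⟩ := not_subset.mp hXS
  obtain ⟨a, haA, haX, hind⟩ := exists_insert_erase_indep_of_mem_spn hX heX
    (fun h => heS (mem_filter.mp h).1) (hspan e (M.subset_ground hX heX) heS)
  obtain ⟨haS, hwea⟩ := mem_filter.mp haA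
  have haX' : a ∉ X.erase e := fun h => haX (mem_of_mem_erase h)
  have hcard : (insert a (X.erase e) \ S).card < n := by
    rw [insert_sdiff_of_mem _ haS, erase_sdiff_comm, ← hn]
    exact card_erase_lt_of_mem (mem_sdiff.mpr ⟨heX, heS⟩)
  obtain ⟨Y, hYS, hY, hsum⟩ := ih _ hcard hind rfl
  refine ⟨Y, hYS, hY, le_trans ?_ hsum⟩
  rw [sum_insert haX', ← add_sum_erase X w heX]
  linarith

end FinMatroid

theorem stmt3_general {α : Type} [DecidableEq α] (M : FinMatroid α) (w : α → ℝ)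
    (S : Finset α)
    (hspan : ∀ e ∈ M.E, e ∉ S → e ∈ M.spn (S.filter fun f => w e ≤ w f))
    (T : Finset α)
    (hmaxS : ∀ X ⊆ S, M.Indep X → ∑ e ∈ X, w e ≤ ∑ e ∈ T, w e) :
    ∀ X, M.Indep X → ∑ e ∈ X, w e ≤ ∑ e ∈ T, w e := by
  intro X hX
  obtain ⟨Y, hYS, hY, hXY⟩ := M.exists_indep_subset_sum_le hspan hX
  exact hXY.trans (hmaxS Y hYS hY)

theorem stmt3 {α : Type} [DecidableEq α] (M : FinMatroid α) (w : α → ℝ)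
    (hw : ∀ e, 0 ≤ w e) (S : Finset α) (hSE : S ⊆ M.E)
    (hspan : ∀ e ∈ M.E, e ∉ S → e ∈ M.spn (S.filter fun f => w e ≤ w f))
    (T : Finset α) (hTS : T ⊆ S) (hT : M.Indep T)
    (hmaxS : ∀ X ⊆ S, M.Indep X → ∑ e ∈ X, w e ≤ ∑ e ∈ T, w e) :
    ∀ X, M.Indep X → ∑ e ∈ X, w e ≤ ∑ e ∈ T, w e :=
  stmt3_general M w S hspan T hmaxS
end

section
/- Given two matroids M₁, M₂ on a common finite ground set E, each equipped with a total order <ᵢ on E, there exists a set K ⊆ E that is independent in both M₁ and M₂ and such that every element e ∈ E is dominated by K in M₁ or in M₂, where E' dominates e in Mᵢ if e ∈ E' or there exists C ⊆ E' with e ∈ spn_{Mᵢ}(C) and c <ᵢ e for all c ∈ C. -/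
open Finset
open scoped Classical

def Dominates {α : Type} [DecidableEq α] (M : FinMatroid α) (lt : α → α → Prop)
    (E' : Finset α) (e : α) : Prop :=
  e ∈ E' ∨ ∃ C : Finset α, C ⊆ E' ∧ e ∈ M.spn C ∧ ∀ c ∈ C, lt c e

section FleinerAux

variable {α : Type} [DecidableEq α]

lemma exists_ltMin (lt : α → α → Prop) [IsStrictTotalOrder α lt] {A : Finset α}
    (h : A.Nonempty) : ∃ m, m ∈ A ∧ ∀ x ∈ A, x ≠ m → lt m x := by
  classical
  induction A using Finset.induction_on with
  | empty => exact absurd rfl h.ne_empty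
  | @insert a s ha ih =>
    rcases s.eq_empty_or_nonempty with rfl | hs
    · exact ⟨a, by simp, by simp⟩
    · obtain ⟨m, hm, hmin⟩ := ih hs
      rcases trichotomous_of lt a m with hlt | heq | hgt
      · refine ⟨a, mem_insert_self _ _, fun x hx hne => ?_⟩
        rcases mem_insert.1 hx with rfl | hx
        · exact absurd rfl hne
        · rcases eq_or_ne x m with rfl | hxm
          · exact hlt
          · exact trans_of lt hlt (hmin x hx hxm)
      · exact absurd (heq ▸ hm) ha
      · refine ⟨m, mem_insert_of_mem hm, fun x hx hne => ?_⟩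
        rcases mem_insert.1 hx with rfl | hx
        · exact hgt
        · exact hmin x hx hne

noncomputable def greedy (M : FinMatroid α) (lt : α → α → Prop) [IsStrictTotalOrder α lt] :
    ℕ → Finset α → Finset α → Finset α
  | 0, acc, _ => acc
  | (n+1), acc, rest =>
    if h : rest.Nonempty then
      greedy M lt n
        (if M.Indep (insert (exists_ltMin lt h).choose acc)
          then insert (exists_ltMin lt h).choose acc else acc)
        (rest.erase (exists_ltMin lt h).choose)
    else acc

lemma greedy_succ (M : FinMatroid α) (lt : α → α → Prop) [IsStrictTotalOrder α lt]
    (n : ℕ) (acc rest : Finset α) (h : rest.Nonempty) :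
    greedy M lt (n+1) acc rest =
      greedy M lt n
        (if M.Indep (insert (exists_ltMin lt h).choose acc)
          then insert (exists_ltMin lt h).choose acc else acc)
        (rest.erase (exists_ltMin lt h).choose) := by
  rw [greedy, dif_pos h]

lemma greedy_succ_empty (M : FinMatroid α) (lt : α → α → Prop) [IsStrictTotalOrder α lt]
    (n : ℕ) (acc : Finset α) : greedy M lt (n+1) acc ∅ = acc := by
  rw [greedy, dif_neg (by simp)]


lemma subset_greedy (M : FinMatroid α) (lt : α → α → Prop) [IsStrictTotalOrder α lt] :
    ∀ (n : ℕ) (acc rest : Finset α), acc ⊆ greedy M lt n acc rest := by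
  intro n
  induction n with
  | zero => intro acc rest; exact Subset.refl _
  | succ n ih =>
    intro acc rest
    rcases rest.eq_empty_or_nonempty with rfl | h
    · rw [greedy_succ_empty]
    · rw [greedy_succ M lt n acc rest h]
      refine Subset.trans ?_ (ih _ _)
      split
      · exact subset_insert _ _
      · exact Subset.refl _

lemma greedy_subset (M : FinMatroid α) (lt : α → α → Prop) [IsStrictTotalOrder α lt] :
    ∀ (n : ℕ) (acc rest : Finset α), greedy M lt n acc rest ⊆ acc ∪ rest := by
  intro n
  induction n with
  | zero => intro acc rest; exact subset_union_left
  | succ n ih =>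
    intro acc rest
    rcases rest.eq_empty_or_nonempty with rfl | h
    · rw [greedy_succ_empty]; exact subset_union_left
    · rw [greedy_succ M lt n acc rest h]
      refine Subset.trans (ih _ _) ?_
      have hm : (exists_ltMin lt h).choose ∈ rest := (exists_ltMin lt h).choose_spec.1
      intro x hx
      rcases mem_union.1 hx with hx | hx
      · have : x ∈ insert (exists_ltMin lt h).choose acc := by
          split at hx
          · exact hx
          · exact mem_insert_of_mem hx
        rcases mem_insert.1 this with rfl | hx'
        · exact mem_union_right _ hm
        · exact mem_union_left _ hx'
      · exact mem_union_right _ (mem_of_mem_erase hx)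

lemma greedy_indep (M : FinMatroid α) (lt : α → α → Prop) [IsStrictTotalOrder α lt] :
    ∀ (n : ℕ) (acc rest : Finset α), M.Indep acc → M.Indep (greedy M lt n acc rest) := by
  intro n
  induction n with
  | zero => intro acc rest h; exact h
  | succ n ih =>
    intro acc rest hacc
    rcases rest.eq_empty_or_nonempty with rfl | h
    · rw [greedy_succ_empty]; exact hacc
    · rw [greedy_succ M lt n acc rest h]
      apply ih
      split
      · assumption
      · exact hacc

lemma greedy_reject (M : FinMatroid α) (lt : α → α → Prop) [IsStrictTotalOrder α lt] :
    ∀ (n : ℕ) (acc rest : Finset α), rest.card ≤ n → M.Indep acc →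
      (∀ a ∈ acc, ∀ r ∈ rest, lt a r) → ∀ e ∈ rest, e ∉ greedy M lt n acc rest →
      ¬ M.Indep (insert e ((greedy M lt n acc rest).filter (fun x => lt x e))) := by
  intro n
  induction n with
  | zero =>
    intro acc rest hcard _ _ e he _
    have : rest = ∅ := Finset.card_eq_zero.1 (Nat.le_zero.1 hcard)
    subst this
    exact absurd he (notMem_empty e)
  | succ n ih =>
    intro acc rest hcard hacc horder e he heg
    have h : rest.Nonempty := ⟨e, he⟩
    rw [greedy_succ M lt n acc rest h] at heg ⊢
    set m := (exists_ltMin lt h).choose with hmdef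
    obtain ⟨hmmem, hmmin⟩ := (exists_ltMin lt h).choose_spec
    have hcard' : (rest.erase m).card ≤ n := by
      rw [card_erase_of_mem hmmem]; omega
    by_cases hem : e = m
    · subst hem
      by_cases hind : M.Indep (insert m acc)
      · exfalso
        apply heg
        rw [if_pos hind]
        exact subset_greedy M lt n _ _ (mem_insert_self _ _)
      · rw [if_neg hind] at heg ⊢
        have hfilter : (greedy M lt n acc (rest.erase m)).filter (fun x => lt x m) = acc := by
          apply Subset.antisymm
          · intro x hx
            obtain ⟨hxg, hxm⟩ := mem_filter.1 hx
            rcases mem_union.1 (greedy_subset M lt n _ _ hxg) with hx' | hx'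
            · exact hx'
            · exact absurd hxm (asymm_of lt (hmmin x (mem_of_mem_erase hx') (ne_of_mem_erase hx')))
          · intro x hx
            exact mem_filter.2 ⟨subset_greedy M lt n _ _ hx, horder x hx m hmmem⟩
        rw [hfilter]
        exact hind
    · have he' : e ∈ rest.erase m := mem_erase.2 ⟨hem, he⟩
      set acc' := if M.Indep (insert m acc) then insert m acc else acc with hacc'def
      have hacc' : M.Indep acc' := by
        rw [hacc'def]; split
        · assumption
        · exact hacc
      have horder' : ∀ a ∈ acc', ∀ r ∈ rest.erase m, lt a r := by
        intro a ha r hr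
        have har : a ∈ insert m acc := by
          rw [hacc'def] at ha; split at ha
          · exact ha
          · exact mem_insert_of_mem ha
        rcases mem_insert.1 har with rfl | ha'
        · exact hmmin r (mem_of_mem_erase hr) (ne_of_mem_erase hr)
        · exact horder a ha' r (mem_of_mem_erase hr)
      exact ih acc' (rest.erase m) hcard' hacc' horder' e he' heg

noncomputable def gset (M : FinMatroid α) (lt : α → α → Prop) [IsStrictTotalOrder α lt]
    (A : Finset α) : Finset α := greedy M lt A.card ∅ A

lemma gset_subset (M : FinMatroid α) (lt : α → α → Prop) [IsStrictTotalOrder α lt]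
    (A : Finset α) : gset M lt A ⊆ A := by
  have := greedy_subset M lt A.card ∅ A
  simpa [gset] using this

lemma gset_indep (M : FinMatroid α) (lt : α → α → Prop) [IsStrictTotalOrder α lt]
    (A : Finset α) : M.Indep (gset M lt A) :=
  greedy_indep M lt A.card ∅ A M.indep_empty

lemma gset_reject (M : FinMatroid α) (lt : α → α → Prop) [IsStrictTotalOrder α lt]
    {A : Finset α} {e : α} (he : e ∈ A) (heg : e ∉ gset M lt A) :
    ¬ M.Indep (insert e ((gset M lt A).filter (fun x => lt x e))) :=
  greedy_reject M lt A.card ∅ A le_rfl M.indep_empty (by simp) e he heg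

lemma rank_eq_of (M : FinMatroid α) {X : Finset α} {n : ℕ}
    (h1 : ∃ Y, Y ⊆ X ∧ M.Indep Y ∧ Y.card = n)
    (h2 : ∀ Y, Y ⊆ X → M.Indep Y → Y.card ≤ n) : M.rank X = n := by
  obtain ⟨Y, hYX, hY, hYc⟩ := h1
  have hmem : n ∈ {n | ∃ Y ⊆ X, M.Indep Y ∧ Y.card = n} := ⟨Y, hYX, hY, hYc⟩
  apply le_antisymm
  · apply csSup_le ⟨n, hmem⟩
    rintro m ⟨Z, hZX, hZ, rfl⟩
    exact h2 Z hZX hZ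
  · refine le_csSup ⟨n, ?_⟩ hmem
    rintro m ⟨Z, hZX, hZ, rfl⟩
    exact h2 Z hZX hZ

lemma mem_spn_of_dep (M : FinMatroid α) {C : Finset α} {e : α} (he : e ∈ M.E)
    (hC : M.Indep C) (heC : e ∉ C) (hdep : ¬ M.Indep (insert e C)) : e ∈ M.spn C := by
  have h1 : M.rank C = C.card :=
    rank_eq_of M ⟨C, Subset.refl _, hC, rfl⟩ (fun Y hY _ => card_le_card hY)
  have h2 : M.rank (insert e C) = C.card := by
    apply rank_eq_of M ⟨C, subset_insert _ _, hC, rfl⟩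
    intro Y hY hYi
    by_contra hcon
    push_neg at hcon
    have hle : Y.card ≤ C.card + 1 := by
      have := card_le_card hY
      rwa [card_insert_of_notMem heC] at this
    have hYeq : Y = insert e C := by
      apply eq_of_subset_of_card_le hY
      rw [card_insert_of_notMem heC]
      omega
    exact hdep (hYeq ▸ hYi)
  exact ⟨he, h2.trans h1.symm⟩

lemma exists_maximal_indep (M : FinMatroid α) {C X : Finset α} (hCX : C ⊆ X)
    (hC : M.Indep C) :
    ∃ D, C ⊆ D ∧ D ⊆ X ∧ M.Indep D ∧ ∀ x ∈ X, x ∉ D → ¬ M.Indep (insert x D) := by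
  classical
  obtain ⟨D, hD, hmax⟩ := Finset.exists_max_image
    (X.powerset.filter fun Y => C ⊆ Y ∧ M.Indep Y) Finset.card
    ⟨C, by simp [hCX, hC]⟩
  simp only [mem_filter, mem_powerset] at hD
  refine ⟨D, hD.2.1, hD.1, hD.2.2, fun x hx hxD hind => ?_⟩
  have hmem : insert x D ∈ X.powerset.filter fun Y => C ⊆ Y ∧ M.Indep Y := by
    simp only [mem_filter, mem_powerset]
    exact ⟨insert_subset hx hD.1, Subset.trans hD.2.1 (subset_insert _ _), hind⟩
  have := hmax _ hmem
  rw [card_insert_of_notMem hxD] at this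
  omega

lemma gset_reject_mono (M : FinMatroid α) (lt : α → α → Prop) [IsStrictTotalOrder α lt]
    {A A' : Finset α} {e : α} (hAA' : A ⊆ A') (heA : e ∈ A)
    (heg : e ∉ gset M lt A) : e ∉ gset M lt A' := by
  intro heg'
  set C := (gset M lt A).filter (fun x => lt x e) with hCdef
  set C' := (gset M lt A').filter (fun x => lt x e) with hC'def
  set P := A'.filter (fun x => lt x e) with hPdef
  have hCdep : ¬ M.Indep (insert e C) := gset_reject M lt heA heg
  have hCi : M.Indep C := M.indep_mono (filter_subset _ _) (gset_indep M lt A)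
  have hC'P : C' ⊆ P := by
    intro x hx
    obtain ⟨hx1, hx2⟩ := mem_filter.1 hx
    exact mem_filter.2 ⟨gset_subset M lt A' hx1, hx2⟩
  have hCP : C ⊆ P := by
    intro x hx
    obtain ⟨hx1, hx2⟩ := mem_filter.1 hx
    exact mem_filter.2 ⟨hAA' (gset_subset M lt A hx1), hx2⟩
  obtain ⟨D, hCD, hDX, hDi, hDmax⟩ :=
    exists_maximal_indep M (hCP.trans (subset_insert e P)) hCi
  have heD : e ∉ D := fun heD => hCdep (M.indep_mono (insert_subset heD hCD) hDi)
  have hDP : D ⊆ P := fun x hx =>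
    (mem_insert.1 (hDX hx)).resolve_left (fun h => heD (by rw [← h]; exact hx))
  have hC'max : ∀ x ∈ P, x ∉ C' → ¬ M.Indep (insert x C') := by
    intro x hxP hxC' hind
    obtain ⟨hxA', hxe⟩ := mem_filter.1 hxP
    have hxg' : x ∉ gset M lt A' := fun hg => hxC' (mem_filter.2 ⟨hg, hxe⟩)
    apply gset_reject M lt hxA' hxg'
    apply M.indep_mono _ hind
    apply insert_subset_insert
    intro y hy
    obtain ⟨hy1, hy2⟩ := mem_filter.1 hy
    exact mem_filter.2 ⟨hy1, trans_of lt hy2 hxe⟩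
  have hC'i : M.Indep C' := M.indep_mono (filter_subset _ _) (gset_indep M lt A')
  have hJ : M.Indep (insert e C') :=
    M.indep_mono (insert_subset heg' (filter_subset _ _)) (gset_indep M lt A')
  have heC' : e ∉ C' := fun hc => absurd (mem_filter.1 hc).2 (irrefl_of lt e)
  by_cases hcard : D.card < (insert e C').card
  · obtain ⟨x, hx, hxi⟩ := M.indep_exchange hDi hJ hcard
    obtain ⟨hx1, hx2⟩ := mem_sdiff.1 hx
    have hxX : x ∈ insert e P := by
      rcases mem_insert.1 hx1 with rfl | hx'
      · exact mem_insert_self _ _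
      · exact mem_insert_of_mem (hC'P hx')
    exact hDmax x hxX hx2 hxi
  · push_neg at hcard
    rw [card_insert_of_notMem heC'] at hcard
    obtain ⟨x, hx, hxi⟩ := M.indep_exchange hC'i hDi (by omega)
    obtain ⟨hx1, hx2⟩ := mem_sdiff.1 hx
    exact hC'max x (hDP hx1) hx2 hxi

lemma dset_mono (M : FinMatroid α) (lt : α → α → Prop) [IsStrictTotalOrder α lt]
    {A A' : Finset α} (h : A ⊆ A') : A \ gset M lt A ⊆ A' \ gset M lt A' := by
  intro x hx
  obtain ⟨hx1, hx2⟩ := mem_sdiff.1 hx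
  exact mem_sdiff.2 ⟨h hx1, gset_reject_mono M lt h hx1 hx2⟩

end FleinerAux

theorem stmt5 {α : Type} [DecidableEq α] (M₁ M₂ : FinMatroid α)
    (hE : M₁.E = M₂.E) (lt₁ lt₂ : α → α → Prop)
    [IsStrictTotalOrder α lt₁] [IsStrictTotalOrder α lt₂] :
    ∃ K : Finset α, M₁.Indep K ∧ M₂.Indep K ∧
      ∀ e ∈ M₁.E, Dominates M₁ lt₁ K e ∨ Dominates M₂ lt₂ K e := by
  classical
  set F : Finset α → Finset α :=
    fun A => M₁.E \ ((M₁.E \ (A \ gset M₁ lt₁ A)) \ gset M₂ lt₂ (M₁.E \ (A \ gset M₁ lt₁ A)))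
    with hF
  have hFmono : ∀ {A A' : Finset α}, A ⊆ A' → F A ⊆ F A' := by
    intro A A' h
    apply sdiff_subset_sdiff (Subset.refl _)
    apply dset_mono M₂ lt₂
    exact sdiff_subset_sdiff (Subset.refl _) (dset_mono M₁ lt₁ h)
  set S : ℕ → Finset α := fun n => F^[n] ∅ with hS
  have hSsucc : ∀ n, S (n+1) = F (S n) := fun n => Function.iterate_succ_apply' F n ∅
  have hSmono : ∀ n, S n ⊆ S (n+1) := by
    intro n
    induction n with
    | zero => simp [hS]
    | succ n ih => rw [hSsucc, hSsucc]; exact hFmono ih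
  have hSE : ∀ n, S n ⊆ M₁.E := by
    intro n
    cases n with
    | zero => simp [hS]
    | succ n => rw [hSsucc]; exact sdiff_subset
  have key : ∃ n, S n = S (n+1) := by
    by_contra hcon
    push_neg at hcon
    have hlb : ∀ n, n ≤ (S n).card := by
      intro n
      induction n with
      | zero => exact Nat.zero_le _
      | succ n ih =>
        have hss : S n ⊂ S (n+1) := (hSmono n).ssubset_of_ne (hcon n)
        have := card_lt_card hss
        omega
    have h1 := hlb (M₁.E.card + 1)
    have h2 := card_le_card (hSE (M₁.E.card + 1))
    omega
  obtain ⟨n, hfix0⟩ := key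
  set A := S n with hA
  have hfix : F A = A := ((hSsucc n).symm.trans hfix0.symm)
  have hAE : A ⊆ M₁.E := hSE n
  set K := gset M₁ lt₁ A with hK
  set B := M₁.E \ (A \ K) with hB
  have hfix' : M₁.E \ (B \ gset M₂ lt₂ B) = A := hfix
  have hKA : K ⊆ A := gset_subset M₁ lt₁ A
  have hKB : K ⊆ B := by
    intro x hx
    exact mem_sdiff.2 ⟨hAE (hKA hx), fun hmem => (mem_sdiff.1 hmem).2 hx⟩
  have hK2 : K = gset M₂ lt₂ B := by
    apply Subset.antisymm
    · intro x hx
      by_contra hxg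
      have hmem : x ∈ B \ gset M₂ lt₂ B := mem_sdiff.2 ⟨hKB hx, hxg⟩
      have hxA : x ∈ A := hKA hx
      rw [← hfix'] at hxA
      exact (mem_sdiff.1 hxA).2 hmem
    · intro x hx
      have hxB : x ∈ B := gset_subset M₂ lt₂ B hx
      by_contra hxK
      by_cases hxA : x ∈ A
      · exact (mem_sdiff.1 hxB).2 (mem_sdiff.2 ⟨hxA, hxK⟩)
      · have hxE : x ∈ M₁.E := (mem_sdiff.1 hxB).1
        have hmem : x ∈ B \ gset M₂ lt₂ B := by
          by_contra h'
          exact hxA (hfix' ▸ mem_sdiff.2 ⟨hxE, h'⟩)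
        exact (mem_sdiff.1 hmem).2 hx
  refine ⟨K, gset_indep M₁ lt₁ A, hK2 ▸ gset_indep M₂ lt₂ B, ?_⟩
  intro e heE
  by_cases heA : e ∈ A
  · left
    by_cases heK : e ∈ K
    · exact Or.inl heK
    · refine Or.inr ⟨K.filter (fun x => lt₁ x e), filter_subset _ _, ?_,
        fun c hc => (mem_filter.1 hc).2⟩
      exact mem_spn_of_dep M₁ heE
        (M₁.indep_mono (filter_subset _ _) (gset_indep M₁ lt₁ A))
        (fun h => heK (filter_subset _ _ h))
        (gset_reject M₁ lt₁ heA heK)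
  · right
    have hmem : e ∈ B \ gset M₂ lt₂ B := by
      by_contra h'
      exact heA (hfix' ▸ mem_sdiff.2 ⟨heE, h'⟩)
    obtain ⟨heB, heg⟩ := mem_sdiff.1 hmem
    have heK : e ∉ K := fun h => heg (hK2 ▸ h)
    refine Or.inr ⟨K.filter (fun x => lt₂ x e), filter_subset _ _, ?_,
      fun c hc => (mem_filter.1 hc).2⟩
    have := mem_spn_of_dep M₂ (hE ▸ heE)
      (M₂.indep_mono (filter_subset _ _) (hK2 ▸ gset_indep M₂ lt₂ B))
      (fun h => heK (filter_subset _ _ h))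
      (by rw [hK2]; exact gset_reject M₂ lt₂ heB heg)
    exact this
end

section
/- Let E be a finite set, w, w₁, w₂, g : E → ℝ≥0 functions, S ⊆ E, and suppose: (i) w₁(e) + w₂(e) ≥ w(e) for all e ∈ E; (ii) for i ∈ {1,2}, a maximum-weight (with respect to wᵢ) independent set Tᵢ of matroid Mᵢ = (E, Iᵢ) satisfies wᵢ(Tᵢ) = g(S). Then for any set S* independent in both M₁ and M₂, g(S) ≥ w(S*)/2. -/
open Finset
open scoped Classical

namespace FinMatroid

variable {α : Type} [DecidableEq α]

theorem Indep.sum_le_sum_add_sum {M : FinMatroid α} {X : Finset α} (hX : M.Indep X)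
    {w w₁ w₂ : α → ℝ} (hdom : ∀ e ∈ M.E, w e ≤ w₁ e + w₂ e) :
    ∑ e ∈ X, w e ≤ ∑ e ∈ X, w₁ e + ∑ e ∈ X, w₂ e := by
  rw [← sum_add_distrib]
  exact sum_le_sum fun e he => hdom e (M.subset_ground hX he)

end FinMatroid

theorem stmt7_general {α : Type} [DecidableEq α] (M₁ M₂ : FinMatroid α)
    (w w₁ w₂ g : α → ℝ)
    (S : Finset α)
    (hdom : ∀ e ∈ M₁.E, w e ≤ w₁ e + w₂ e)
    (T₁ T₂ : Finset α)
    (hT₁max : ∀ X, M₁.Indep X → ∑ e ∈ X, w₁ e ≤ ∑ e ∈ T₁, w₁ e)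
    (hT₁g : ∑ e ∈ T₁, w₁ e = ∑ e ∈ S, g e)
    (hT₂max : ∀ X, M₂.Indep X → ∑ e ∈ X, w₂ e ≤ ∑ e ∈ T₂, w₂ e)
    (hT₂g : ∑ e ∈ T₂, w₂ e = ∑ e ∈ S, g e)
    (Sstar : Finset α) (hS1 : M₁.Indep Sstar) (hS2 : M₂.Indep Sstar) :
    (∑ e ∈ Sstar, w e) / 2 ≤ ∑ e ∈ S, g e :=
  calc (∑ e ∈ Sstar, w e) / 2
      ≤ (∑ e ∈ Sstar, w₁ e + ∑ e ∈ Sstar, w₂ e) / 2 := by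
        gcongr
        exact hS1.sum_le_sum_add_sum hdom
    _ ≤ (∑ e ∈ T₁, w₁ e + ∑ e ∈ T₂, w₂ e) / 2 := by
        gcongr ?_ / 2
        exact add_le_add (hT₁max Sstar hS1) (hT₂max Sstar hS2)
    _ = ∑ e ∈ S, g e := by rw [hT₁g, hT₂g]; ring

theorem stmt7 {α : Type} [DecidableEq α] (M₁ M₂ : FinMatroid α) (hE : M₁.E = M₂.E)
    (w w₁ w₂ g : α → ℝ) (hwnn : ∀ e, 0 ≤ w e) (hw₁nn : ∀ e, 0 ≤ w₁ e)
    (hw₂nn : ∀ e, 0 ≤ w₂ e) (hgnn : ∀ e, 0 ≤ g e)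
    (S : Finset α)
    (hdom : ∀ e ∈ M₁.E, w e ≤ w₁ e + w₂ e)
    (T₁ T₂ : Finset α)
    (hT₁ : M₁.Indep T₁) (hT₁max : ∀ X, M₁.Indep X → ∑ e ∈ X, w₁ e ≤ ∑ e ∈ T₁, w₁ e)
    (hT₁g : ∑ e ∈ T₁, w₁ e = ∑ e ∈ S, g e)
    (hT₂ : M₂.Indep T₂) (hT₂max : ∀ X, M₂.Indep X → ∑ e ∈ X, w₂ e ≤ ∑ e ∈ T₂, w₂ e)
    (hT₂g : ∑ e ∈ T₂, w₂ e = ∑ e ∈ S, g e)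
    (Sstar : Finset α) (hS1 : M₁.Indep Sstar) (hS2 : M₂.Indep Sstar) :
    (∑ e ∈ Sstar, w e) / 2 ≤ ∑ e ∈ S, g e :=
  stmt7_general M₁ M₂ w w₁ w₂ g S hdom T₁ T₂ hT₁max hT₁g hT₂max hT₂g Sstar hS1 hS2
end

section
/- There exist two matroids M₁ = (E, I₁), M₂ = (E, I₂) on E = {a, b, c, d} with I₁ = {X ⊆ E : {a,b} ⊄ X} and I₂ = {X ⊆ E : |X| ≤ 2}, and for every ε > 0 weights w(a) = 1, w(b) = 1+ε, w(c) = 2ε, w(d) = 3ε, such that M₁ and M₂ are matroids, the set {c, d} is a maximal common independent set containing the two last-arriving elements, and w({c,d}) = 5ε while the maximum weight of a common independent set is at least 1 + ε (achieved e.g. by {b, c}); hence the ratio of the optimum to w({c,d}) exceeds 1/(5ε). -/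
open Finset
open scoped Classical

noncomputable def w8 (ε : ℝ) : Fin 4 → ℝ := ![1, 1 + ε, 2 * ε, 3 * ε]

/-! `M₁` is the matroid whose only circuit is `{a, b}` and `M₂` the uniform matroid of rank 2.
The set `{c, d}` is maximal in `M₂` merely because it already has rank-many elements, yet it
weighs `5ε` against the `1 + 3ε` of the common independent set `{b, c}`. -/

namespace FinMatroid

variable {α : Type} [DecidableEq α]

def uniform (E : Finset α) (k : ℕ) : FinMatroid α where
  E := E
  Indep X := X ⊆ E ∧ X.card ≤ k
  indep_empty := ⟨empty_subset E, by simp⟩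
  subset_ground _ hX := hX.1
  indep_mono _ _ hXY hY := ⟨hXY.trans hY.1, (card_le_card hXY).trans hY.2⟩
  indep_exchange X Y hX hY hlt := by
    obtain ⟨e, heY, heX⟩ := exists_mem_notMem_of_card_lt_card hlt
    refine ⟨e, mem_sdiff.2 ⟨heY, heX⟩, insert_subset (hY.1 heY) hX.1, ?_⟩
    rw [card_insert_of_notMem heX]
    omega

theorem uniform_not_indep_insert {E X : Finset α} {e : α} (he : e ∉ X) :
    ¬ (uniform E X.card).Indep (insert e X) := by
  rintro ⟨-, hcard⟩
  rw [card_insert_of_notMem he] at hcard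
  omega

/- If every element of `Y \ X` completes `X` to a superset of `C`, then `Y \ X ⊆ {p}` for any
`p ∈ C \ X`; counting then forces `X ⊆ Y`, so `C ⊆ insert p X ⊆ Y`. -/
theorem exists_insert_not_superset {C X Y : Finset α} (hX : ¬ C ⊆ X) (hY : ¬ C ⊆ Y)
    (hlt : X.card < Y.card) : ∃ e ∈ Y \ X, ¬ C ⊆ insert e X := by
  by_contra! hcover
  obtain ⟨p, hpC, hpX⟩ := not_subset.1 hX
  have hYX : Y \ X ⊆ {p} := fun e he => by
    have := hcover e he hpC
    grind
  have hXY : X ⊆ Y := by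
    have hsplit := card_sdiff_add_card_inter Y X
    have hsdiff : (Y \ X).card ≤ 1 := by simpa using card_le_card hYX
    exact inter_eq_right.1 (eq_of_subset_of_card_le inter_subset_right (by omega))
  obtain ⟨e, heY, heX⟩ := exists_mem_notMem_of_card_lt_card hlt
  have hep : e = p := mem_singleton.1 (hYX (mem_sdiff.2 ⟨heY, heX⟩))
  subst hep
  exact hY ((hcover e (mem_sdiff.2 ⟨heY, heX⟩)).trans (insert_subset heY hXY))

def uniqueCircuit (E C : Finset α) (hC : C.Nonempty) : FinMatroid α where
  E := E
  Indep X := X ⊆ E ∧ ¬ C ⊆ X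
  indep_empty := ⟨empty_subset E, fun h => hC.ne_empty (subset_empty.1 h)⟩
  subset_ground _ hX := hX.1
  indep_mono _ _ hXY hY := ⟨hXY.trans hY.1, fun hCX => hY.2 (hCX.trans hXY)⟩
  indep_exchange X Y hX hY hlt := by
    obtain ⟨e, he, hC'⟩ := exists_insert_not_superset hX.2 hY.2 hlt
    exact ⟨e, he, insert_subset (hY.1 (mem_sdiff.1 he).1) hX.1, hC'⟩

end FinMatroid

open FinMatroid

theorem stmt8 : ∀ ε : ℝ, 0 < ε →
    ∃ M₁ M₂ : FinMatroid (Fin 4),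
      M₁.E = Finset.univ ∧ M₂.E = Finset.univ ∧
      (∀ X, M₁.Indep X ↔ ¬ (({0, 1} : Finset (Fin 4)) ⊆ X)) ∧
      (∀ X, M₂.Indep X ↔ X.card ≤ 2) ∧
      M₁.Indep {2, 3} ∧ M₂.Indep {2, 3} ∧
      (∀ e : Fin 4, e ∉ ({2, 3} : Finset (Fin 4)) →
        ¬ (M₁.Indep (insert e {2, 3}) ∧ M₂.Indep (insert e {2, 3}))) ∧
      (∑ e ∈ ({2, 3} : Finset (Fin 4)), w8 ε e) = 5 * ε ∧
      (∃ X : Finset (Fin 4), M₁.Indep X ∧ M₂.Indep X ∧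
        1 + ε ≤ ∑ e ∈ X, w8 ε e ∧
        1 / (5 * ε) < (∑ e ∈ X, w8 ε e) / (∑ e ∈ ({2, 3} : Finset (Fin 4)), w8 ε e)) := by
  intro ε hε
  have hcd : ∑ e ∈ ({2, 3} : Finset (Fin 4)), w8 ε e = 5 * ε := by
    rw [sum_pair (by decide)]
    simp only [w8, Fin.isValue, Matrix.cons_val]
    ring
  have hbc : ∑ e ∈ ({1, 2} : Finset (Fin 4)), w8 ε e = 1 + 3 * ε := by
    rw [sum_pair (by decide)]
    simp only [w8, Fin.isValue, Matrix.cons_val_one, Matrix.cons_val_zero, Matrix.cons_val]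
    ring
  refine ⟨uniqueCircuit univ {0, 1} (insert_nonempty 0 {1}), uniform univ 2, rfl, rfl,
    by simp [uniqueCircuit], by simp [uniform], ⟨subset_univ _, by decide⟩, ⟨subset_univ _, le_rfl⟩,
    fun e he ⟨_, h₂⟩ => uniform_not_indep_insert he h₂, hcd,
    {1, 2}, ⟨subset_univ _, by decide⟩, ⟨subset_univ _, le_rfl⟩, by rw [hbc]; linarith, ?_⟩
  rw [hbc, hcd]
  exact div_lt_div_of_pos_right (by linarith) (by positivity)
end

section
/- Let h : 2^E → ℝ≥0 be a nonnegative submodular function on a finite ground set E, and let S be a random subset of E such that each element of E belongs to S with probability at most q (not necessarily independently). Then E[h(S)] ≥ (1 − q)·h(∅). -/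
/-! Order the ground set by decreasing marginal probability, `x₁ ≥ ⋯ ≥ xₙ`, and let
`Aᵢ = {e₁, …, eᵢ}`. Telescoping along this chain and using submodularity (the gain of `eᵢ`
over `S ∩ Aᵢ₋₁` is at least its gain over `Aᵢ₋₁`) gives
`E[h(S)] ≥ (1 - x₁) h(∅) + ∑ᵢ (xᵢ - xᵢ₊₁) h(Aᵢ) + xₙ h(E)`, and every term but the first is
nonnegative. Inductively: adding to `V` an element `u` of marginal `x` not exceeding the
marginals on `V` preserves `E[h(S ∩ U)] ≥ (1 - q) h(∅) + x h(U)`. -/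

open Finset
open scoped Classical

section Submodular

variable {α : Type*} [DecidableEq α] {h : Finset α → ℝ}

lemma sub_le_sub_of_submodular (hsub : ∀ A B : Finset α, h (A ∪ B) + h (A ∩ B) ≤ h A + h B)
    {T V : Finset α} {u : α} (hTV : T ⊆ V) (hu : u ∉ V) :
    h (insert u V) - h V ≤ h (insert u T) - h T := by
  have hunion : insert u T ∪ V = insert u V := by
    rw [insert_union, union_eq_right.mpr hTV]
  have hinter : insert u T ∩ V = T := by
    rw [insert_inter_of_notMem hu, inter_eq_left.mpr hTV]
  have := hsub (insert u T) V
  rw [hunion, hinter] at this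
  linarith

lemma add_ite_le_inter_insert (hsub : ∀ A B : Finset α, h (A ∪ B) + h (A ∩ B) ≤ h A + h B)
    (S : Finset α) {V : Finset α} {u : α} (hu : u ∉ V) :
    h (S ∩ V) + (if u ∈ S then h (insert u V) - h V else 0) ≤ h (S ∩ insert u V) := by
  split_ifs with huS
  · rw [inter_insert_of_mem huS]
    linarith [sub_le_sub_of_submodular hsub (inter_subset_right (s₁ := S)) hu]
  · rw [inter_insert_of_notMem huS, add_zero]

variable {ι : Type*} [Fintype ι] {w : ι → ℝ} {S : ι → Finset α} {q : ℝ}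

lemma expectation_inter_insert_ge (hsub : ∀ A B : Finset α, h (A ∪ B) + h (A ∩ B) ≤ h A + h B)
    (hw : ∀ i, 0 ≤ w i) {V : Finset α} {u : α} (hu : u ∉ V) :
    ∑ i, w i * h (S i ∩ V) + (∑ i, if u ∈ S i then w i else 0) * (h (insert u V) - h V) ≤
      ∑ i, w i * h (S i ∩ insert u V) := by
  rw [sum_mul, ← sum_add_distrib]
  refine sum_le_sum fun i _ => ?_
  have := mul_le_mul_of_nonneg_left (add_ite_le_inter_insert hsub (S i) hu) (hw i)
  split_ifs at this ⊢ <;> linarith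

lemma expectation_inter_ge (hnn : ∀ A, 0 ≤ h A)
    (hsub : ∀ A B : Finset α, h (A ∪ B) + h (A ∩ B) ≤ h A + h B)
    (hw : ∀ i, 0 ≤ w i) (hw1 : ∑ i, w i = 1) (U : Finset α)
    (hmarg : ∀ e ∈ U, (∑ i, if e ∈ S i then w i else 0) ≤ q) :
    ∀ a ≤ q, (∀ e ∈ U, a ≤ ∑ i, if e ∈ S i then w i else 0) →
      (1 - q) * h ∅ + a * h U ≤ ∑ i, w i * h (S i ∩ U) := by
  induction U using induction_on_min_value (fun e => ∑ i, if e ∈ S i then w i else 0) with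
  | empty =>
    intro a haq _
    simp only [inter_empty, ← sum_mul, hw1, one_mul]
    nlinarith [hnn ∅]
  | insert u V hu hmin ih =>
    intro a _ ha
    set x := ∑ i, if u ∈ S i then w i else 0
    have hV : (1 - q) * h ∅ + x * h V ≤ ∑ i, w i * h (S i ∩ V) :=
      ih (fun e he => hmarg e (mem_insert_of_mem he)) x (hmarg u (mem_insert_self u V)) hmin
    have hax : a * h (insert u V) ≤ x * h (insert u V) :=
      mul_le_mul_of_nonneg_right (ha u (mem_insert_self u V)) (hnn _)
    linarith [expectation_inter_insert_ge (S := S) hsub hw hu]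

end Submodular

theorem stmt11_general {α : Type} [Fintype α] [DecidableEq α]
    (h : Finset α → ℝ) (hnn : ∀ A, 0 ≤ h A)
    (hsub : ∀ A B : Finset α, h (A ∪ B) + h (A ∩ B) ≤ h A + h B)
    (q : ℝ) (hq0 : 0 ≤ q)
    (p : PMF (Finset α))
    (hmarg : ∀ e : α, (∑' X : Finset α, if e ∈ X then (p X).toReal else 0) ≤ q) :
    (1 - q) * h ∅ ≤ ∑' X : Finset α, (p X).toReal * h X := by
  have hp1 : ∑ X, (p X).toReal = 1 := by
    rw [← tsum_fintype (L := .unconditional _), ← ENNReal.tsum_toReal_eq p.apply_ne_top,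
      p.tsum_coe, ENNReal.toReal_one]
  simp only [tsum_fintype] at hmarg ⊢
  have := expectation_inter_ge (S := id) hnn hsub (fun _ => ENNReal.toReal_nonneg) hp1 univ
    (fun e _ => hmarg e) 0 hq0 (fun e _ => sum_nonneg fun X _ => by positivity)
  simpa [inter_univ] using this

theorem stmt11 {α : Type} [Fintype α] [DecidableEq α]
    (h : Finset α → ℝ) (hnn : ∀ A, 0 ≤ h A)
    (hsub : ∀ A B : Finset α, h (A ∪ B) + h (A ∩ B) ≤ h A + h B)
    (q : ℝ) (hq0 : 0 ≤ q) (hq1 : q ≤ 1)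
    (p : PMF (Finset α))
    (hmarg : ∀ e : α, (∑' X : Finset α, if e ∈ X then (p X).toReal else 0) ≤ q) :
    (1 - q) * h ∅ ≤ ∑' X : Finset α, (p X).toReal * h X :=
  stmt11_general h hnn hsub q hq0 p hmarg
end
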